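/- arXiv:1104.2303 — 7 statements merged into one kernel-verified Lean document; each statement's English description precedes it below -/
import Mathlib

section
/- With notation as above (p_i(t) = a_i·k^(t·m+s) + b_i·k^s·(k^(t·m)−1)/(k^m−1) + c_i for i = 1,2, with p₂(t) > 0 for all t ≥ 0), let γ = (a₁·(k^m−1)+b₁)/(a₂·(k^m−1)+b₂) when a₂·(k^m−1)+b₂ > 0. Then the sequence q(t) = p₁(t)/p₂(t) is either strictly increasing with q(t) < γ for all t, constant equal to γ, or strictly decreasing with q(t) > γ for all t; in particular q is monotone. -/
/-!
Writing `K = k^m - 1` and `x(t) = k^(t m)`, both `pᵢ(t) = Aᵢ x(t) + Bᵢ` are affine in `x(t)`,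
where `Aᵢ = (aᵢ K + bᵢ) k^s / K`, so `A₁ / A₂ = γ`. A quotient of affine
functions with positive denominator is `γ - δ / (A₂ x + B₂)` for a constant `δ`, and
`1 / (A₂ x(t) + B₂)` is positive and strictly decreasing in `t`, so the sign of `δ` decides
between the three cases.
-/

section Trichotomy

variable {α : Type*} [Preorder α]

def MonotoneTrichotomy (q : α → ℝ) (γ : ℝ) : Prop :=
  (StrictMono q ∧ ∀ t, q t < γ) ∨ (∀ t, q t = γ) ∨ (StrictAnti q ∧ ∀ t, q t > γ)

theorem monotoneTrichotomy_sub_mul {g : α → ℝ} (hg : StrictAnti g) (hg₀ : ∀ t, 0 < g t)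
    (γ δ : ℝ) : MonotoneTrichotomy (fun t => γ - δ * g t) γ := by
  rcases lt_trichotomy δ 0 with hδ | rfl | hδ
  · refine Or.inr (Or.inr ⟨fun a b hab => ?_, fun t => ?_⟩)
    · exact sub_lt_sub_left (mul_lt_mul_of_neg_left (hg hab) hδ) γ
    · linarith [mul_neg_of_neg_of_pos hδ (hg₀ t)]
  · exact Or.inr (Or.inl fun t => by simp)
  · refine Or.inl ⟨fun a b hab => ?_, fun t => ?_⟩
    · exact sub_lt_sub_left (mul_lt_mul_of_pos_left (hg hab) hδ) γ
    · linarith [mul_pos hδ (hg₀ t)]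

theorem affine_div_affine_eq_sub {A₁ B₁ A₂ B₂ y : ℝ} (hA₂ : A₂ ≠ 0) (hy : A₂ * y + B₂ ≠ 0) :
    (A₁ * y + B₁) / (A₂ * y + B₂) = A₁ / A₂ - (A₁ * B₂ - A₂ * B₁) / A₂ * (A₂ * y + B₂)⁻¹ := by
  rw [eq_sub_iff_add_eq, ← div_eq_mul_inv, div_div, div_add_div _ _ hy (mul_ne_zero hA₂ hy),
    div_eq_div_iff (mul_ne_zero hy (mul_ne_zero hA₂ hy)) hA₂]
  ring

theorem monotoneTrichotomy_affine_div_affine {x : α → ℝ} (hx : StrictMono x) {A₁ B₁ A₂ B₂ : ℝ}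
    (hA₂ : 0 < A₂) (hpos : ∀ t, 0 < A₂ * x t + B₂) :
    MonotoneTrichotomy (fun t => (A₁ * x t + B₁) / (A₂ * x t + B₂)) (A₁ / A₂) := by
  have hanti : StrictAnti fun t => (A₂ * x t + B₂)⁻¹ := fun a b hab =>
    inv_strictAnti₀ (hpos a) (by gcongr; exact hx hab)
  simpa only [affine_div_affine_eq_sub hA₂.ne' (hpos _).ne'] using
    monotoneTrichotomy_sub_mul hanti (fun t => inv_pos.2 (hpos t)) _ _

end Trichotomy

theorem pumped_eq_affine {k : ℝ} {m : ℕ} (hK : k ^ m - 1 ≠ 0) (a b c : ℝ) (t s : ℕ) :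
    a * k ^ (t * m + s) + b * k ^ s * (k ^ (t * m) - 1) / (k ^ m - 1) + c =
      (a * (k ^ m - 1) + b) * k ^ s / (k ^ m - 1) * k ^ (t * m) +
        (c - b * k ^ s / (k ^ m - 1)) := by
  field_simp
  ring

theorem pumped_quotient_monotone_trichotomy (k m s : ℕ) (hk : 2 ≤ k) (hm : 1 ≤ m)
    (a₁ a₂ b₁ b₂ c₁ c₂ : ℕ)
    (p₁ p₂ : ℕ → ℝ)
    (hp₁ : ∀ t, p₁ t = (a₁ : ℝ) * (k : ℝ) ^ (t * m + s) +
        (b₁ : ℝ) * (k : ℝ) ^ s * ((k : ℝ) ^ (t * m) - 1) / ((k : ℝ) ^ m - 1) + c₁)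
    (hp₂ : ∀ t, p₂ t = (a₂ : ℝ) * (k : ℝ) ^ (t * m + s) +
        (b₂ : ℝ) * (k : ℝ) ^ s * ((k : ℝ) ^ (t * m) - 1) / ((k : ℝ) ^ m - 1) + c₂)
    (hpos : ∀ t, 0 < p₂ t)
    (hden : 0 < (a₂ : ℝ) * ((k : ℝ) ^ m - 1) + b₂) :
    (StrictMono (fun t => p₁ t / p₂ t) ∧
        ∀ t, p₁ t / p₂ t < (a₁ * ((k : ℝ) ^ m - 1) + b₁) / (a₂ * ((k : ℝ) ^ m - 1) + b₂)) ∨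
    (∀ t, p₁ t / p₂ t = (a₁ * ((k : ℝ) ^ m - 1) + b₁) / (a₂ * ((k : ℝ) ^ m - 1) + b₂)) ∨
    (StrictAnti (fun t => p₁ t / p₂ t) ∧
        ∀ t, p₁ t / p₂ t > (a₁ * ((k : ℝ) ^ m - 1) + b₁) / (a₂ * ((k : ℝ) ^ m - 1) + b₂)) := by
  have hkm : (1 : ℝ) < (k : ℝ) ^ m := one_lt_pow₀ (by exact_mod_cast hk) (by omega)
  have hK : (0 : ℝ) < (k : ℝ) ^ m - 1 := sub_pos.2 hkm
  have hks : (0 : ℝ) < (k : ℝ) ^ s := by positivity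
  have hx : StrictMono fun t : ℕ => (k : ℝ) ^ (t * m) := fun t t' h => by
    simpa only [mul_comm _ m, pow_mul] using pow_lt_pow_right₀ hkm h
  simp only [hp₁, hp₂, pumped_eq_affine hK.ne'] at hpos ⊢
  have hγ := mul_div_mul_right ((a₁ : ℝ) * ((k : ℝ) ^ m - 1) + b₁)
    ((a₂ : ℝ) * ((k : ℝ) ^ m - 1) + b₂) hks.ne'
  rw [← div_div_div_cancel_right₀ hK.ne'] at hγ
  rw [← hγ]
  exact monotoneTrichotomy_affine_div_affine hx (by positivity) hpos
end

section
/- Let A₁ ≥ 0 and A₂ > 0 be reals. If D_{1,j}, D_{2,j} > 0 are sequences with D_{2,j} → 0 such that lim_j D_{1,j}/D_{2,j} and lim_j (A₁ + D_{1,j})/(A₂ + D_{2,j}) exist and are equal, then both limits equal A₁/A₂. -/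
theorem equal_limits_eq_ratio (A₁ A₂ : ℝ) (hA₁ : 0 ≤ A₁) (hA₂ : 0 < A₂)
    (D₁ D₂ : ℕ → ℝ) (hD₁ : ∀ j, 0 < D₁ j) (hD₂ : ∀ j, 0 < D₂ j)
    (hD₂0 : Filter.Tendsto D₂ Filter.atTop (nhds 0))
    (ℓ : ℝ)
    (h1 : Filter.Tendsto (fun j => D₁ j / D₂ j) Filter.atTop (nhds ℓ))
    (h2 : Filter.Tendsto (fun j => (A₁ + D₁ j) / (A₂ + D₂ j)) Filter.atTop (nhds ℓ)) :
    ℓ = A₁ / A₂ := by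
  have hD₁0 : Filter.Tendsto D₁ Filter.atTop (nhds 0) := by
    have := h1.mul hD₂0
    rw [mul_zero] at this
    refine this.congr fun j => ?_
    exact div_mul_cancel₀ _ (hD₂ j).ne'
  have h3 : Filter.Tendsto (fun j => (A₁ + D₁ j) / (A₂ + D₂ j)) Filter.atTop
      (nhds ((A₁ + 0) / (A₂ + 0))) := by
    exact Filter.Tendsto.div ((tendsto_const_nhds).add hD₁0)
      ((tendsto_const_nhds).add hD₂0) (by positivity)
  rw [add_zero, add_zero] at h3
  exact tendsto_nhds_unique h2 h3
end

section
/- Fix an integer k ≥ 2 and a rational number β = P/Q with P ≥ 0, Q ≥ 1 integers. The language of words x over the alphabet Σ_k × Σ_k (Σ_k = {0,…,k−1}) such that [π₁(x)]_k ≤ β · [π₂(x)]_k (where [π_i(x)]_k is the integer represented in base k by the i-th coordinate projection of x) is a regular language. -/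
/-- The base-k value of a word of digits, most significant digit first. -/
def baseVal (k : ℕ) (w : List (Fin k)) : ℕ :=
  w.foldl (fun acc d => acc * k + d.val) 0

namespace LeqBeta

variable (k P Q : ℕ)

/-- Clamp an integer to the interval [-Q, P+1]. -/
def clampZ (d : ℤ) : ℤ := max (-(Q : ℤ)) (min ((P : ℤ) + 1) d)

lemma clamp_mem (d : ℤ) : clampZ P Q d ∈ Finset.Icc (-(Q : ℤ)) ((P : ℤ) + 1) := by
  simp only [clampZ, Finset.mem_Icc]
  constructor <;> omega

lemma clamp_nonpos_iff (d : ℤ) : clampZ P Q d ≤ 0 ↔ d ≤ 0 := by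
  have hQ' : (0 : ℤ) ≤ Q := Int.ofNat_nonneg Q
  have hP' : (0 : ℤ) ≤ P := Int.ofNat_nonneg P
  simp only [clampZ]; omega

lemma clamp_of_ge {d : ℤ} (h : (P : ℤ) + 1 ≤ d) : clampZ P Q d = (P : ℤ) + 1 := by
  simp only [clampZ]; omega

lemma clamp_of_le {d : ℤ} (h : d ≤ -(Q : ℤ)) : clampZ P Q d = -(Q : ℤ) := by
  have hP' : (0 : ℤ) ≤ P := Int.ofNat_nonneg P
  simp only [clampZ]; omega

lemma clamp_idem {d : ℤ} (h1 : -(Q : ℤ) ≤ d) (h2 : d ≤ (P : ℤ) + 1) : clampZ P Q d = d := by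
  simp only [clampZ]; omega

lemma clamp_step (hk : 2 ≤ k) {e : ℤ} (he1 : -((P : ℤ) * (k - 1)) ≤ e)
    (he2 : e ≤ (Q : ℤ) * (k - 1)) (d : ℤ) :
    clampZ P Q ((k : ℤ) * clampZ P Q d + e) = clampZ P Q ((k : ℤ) * d + e) := by
  have hk' : (2 : ℤ) ≤ k := by exact_mod_cast hk
  rcases le_or_gt d (-(Q : ℤ)) with h | h
  · rw [clamp_of_le P Q h]
    rw [clamp_of_le P Q (d := (k : ℤ) * -(Q : ℤ) + e) (by nlinarith),
        clamp_of_le P Q (d := (k : ℤ) * d + e) (by nlinarith)]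
  rcases le_or_gt ((P : ℤ) + 1) d with h2 | h2
  · rw [clamp_of_ge P Q h2]
    rw [clamp_of_ge P Q (d := (k : ℤ) * ((P : ℤ) + 1) + e) (by nlinarith),
        clamp_of_ge P Q (d := (k : ℤ) * d + e) (by nlinarith)]
  · rw [clamp_idem P Q h.le h2.le]

end LeqBeta

open LeqBeta in
theorem leq_beta_language_regular (k : ℕ) (hk : 2 ≤ k) (P Q : ℕ) (hQ : 1 ≤ Q) :
    Language.IsRegular
      { x : List (Fin k × Fin k) |
        (baseVal k (x.map Prod.fst) : ℚ) ≤ ((P : ℚ) / (Q : ℚ)) * (baseVal k (x.map Prod.snd) : ℚ) } := by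
  classical
  refine ⟨{ d : ℤ // d ∈ Finset.Icc (-(Q : ℤ)) ((P : ℤ) + 1) },
    FinsetCoe.fintype (Finset.Icc (-(Q : ℤ)) ((P : ℤ) + 1)), ?_, ?_⟩
  · exact
      { step := fun s ab =>
          ⟨clampZ P Q ((k : ℤ) * s.1 + ((Q : ℤ) * (ab.1.val : ℤ) - (P : ℤ) * (ab.2.val : ℤ))),
            clamp_mem P Q _⟩
        start := ⟨clampZ P Q 0, clamp_mem P Q 0⟩
        accept := { s | s.1 ≤ 0 } }
  -- the main invariant
  set M : DFA (Fin k × Fin k) { d : ℤ // d ∈ Finset.Icc (-(Q : ℤ)) ((P : ℤ) + 1) } :=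
      { step := fun s ab =>
          ⟨clampZ P Q ((k : ℤ) * s.1 + ((Q : ℤ) * (ab.1.val : ℤ) - (P : ℤ) * (ab.2.val : ℤ))),
            clamp_mem P Q _⟩
        start := ⟨clampZ P Q 0, clamp_mem P Q 0⟩
        accept := { s | s.1 ≤ 0 } } with hM
  have key : ∀ (x : List (Fin k × Fin k)) (d : ℤ),
      M.evalFrom ⟨clampZ P Q d, clamp_mem P Q d⟩ x =
        ⟨clampZ P Q (x.foldl
          (fun acc ab => (k : ℤ) * acc + ((Q : ℤ) * (ab.1.val : ℤ) - (P : ℤ) * (ab.2.val : ℤ))) d),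
          clamp_mem P Q _⟩ := by
    intro x
    induction x with
    | nil => intro d; rfl
    | cons ab x ih =>
      intro d
      have he1 : -((P : ℤ) * (k - 1)) ≤ (Q : ℤ) * (ab.1.val : ℤ) - (P : ℤ) * (ab.2.val : ℤ) := by
        have h1 : (0 : ℤ) ≤ (Q : ℤ) * (ab.1.val : ℤ) := by positivity
        have h2 : (ab.2.val : ℤ) ≤ (k : ℤ) - 1 := by
          have := ab.2.isLt; omega
        nlinarith [Int.ofNat_nonneg P]
      have he2 : (Q : ℤ) * (ab.1.val : ℤ) - (P : ℤ) * (ab.2.val : ℤ) ≤ (Q : ℤ) * (k - 1) := by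
        have h1 : (0 : ℤ) ≤ (P : ℤ) * (ab.2.val : ℤ) := by positivity
        have h2 : (ab.1.val : ℤ) ≤ (k : ℤ) - 1 := by
          have := ab.1.isLt; omega
        nlinarith [Int.ofNat_nonneg Q]
      have hstep : M.step ⟨clampZ P Q d, clamp_mem P Q d⟩ ab =
          ⟨clampZ P Q ((k : ℤ) * d + ((Q : ℤ) * (ab.1.val : ℤ) - (P : ℤ) * (ab.2.val : ℤ))),
            clamp_mem P Q _⟩ :=
        Subtype.ext (clamp_step k P Q hk he1 he2 d)
      have step_eq : M.evalFrom ⟨clampZ P Q d, clamp_mem P Q d⟩ (ab :: x) =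
          M.evalFrom ⟨clampZ P Q ((k : ℤ) * d + ((Q : ℤ) * (ab.1.val : ℤ) - (P : ℤ) * (ab.2.val : ℤ))),
            clamp_mem P Q _⟩ x := by
        show M.evalFrom (M.step _ ab) x = _
        rw [hstep]
      rw [step_eq, ih]
      rfl
  -- relate the combined fold to the two baseVal folds
  have fold_eq : ∀ (x : List (Fin k × Fin k)) (a b : ℕ),
      x.foldl (fun acc ab => (k : ℤ) * acc + ((Q : ℤ) * (ab.1.val : ℤ) - (P : ℤ) * (ab.2.val : ℤ)))
        ((Q : ℤ) * a - (P : ℤ) * b)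
      = (Q : ℤ) * ((x.map Prod.fst).foldl (fun acc d => acc * k + d.val) a : ℕ)
        - (P : ℤ) * ((x.map Prod.snd).foldl (fun acc d => acc * k + d.val) b : ℕ) := by
    intro x
    induction x with
    | nil => intro a b; simp
    | cons ab x ih =>
      intro a b
      simp only [List.foldl_cons, List.map_cons]
      have : (k : ℤ) * ((Q : ℤ) * a - (P : ℤ) * b)
          + ((Q : ℤ) * (ab.1.val : ℤ) - (P : ℤ) * (ab.2.val : ℤ))
          = (Q : ℤ) * ((a * k + ab.1.val : ℕ) : ℤ) - (P : ℤ) * ((b * k + ab.2.val : ℕ) : ℤ) := by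
        push_cast; ring
      rw [this, ih]
  ext x
  have hinv := key x 0
  have hfold := fold_eq x 0 0
  simp only [Nat.cast_zero, mul_zero, sub_zero] at hfold
  have hstart : M.start = ⟨clampZ P Q 0, clamp_mem P Q 0⟩ := rfl
  have hmem : x ∈ M.accepts ↔ M.evalFrom M.start x ∈ M.accept := Iff.rfl
  rw [hmem, hstart, hinv]
  have : (0 : ℤ) = (Q : ℤ) * (0 : ℕ) - (P : ℤ) * (0 : ℕ) := by simp
  rw [show ((0:ℤ)) = (Q : ℤ) * ((0:ℕ) : ℤ) - (P : ℤ) * ((0:ℕ) : ℤ) by simp] at hfold ⊢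
  simp only [DFA.mem_accepts] at *
  constructor
  · intro h
    have h2 : (x.foldl (fun acc ab => (k : ℤ) * acc + ((Q : ℤ) * (ab.1.val : ℤ) - (P : ℤ) * (ab.2.val : ℤ)))
        ((Q : ℤ) * ((0:ℕ) : ℤ) - (P : ℤ) * ((0:ℕ) : ℤ))) ≤ 0 := by
      have := (clamp_nonpos_iff P Q _).mp h
      exact this
    rw [hfold] at h2
    have hQ0 : (0 : ℚ) < (Q : ℚ) := by exact_mod_cast hQ
    show (baseVal k (x.map Prod.fst) : ℚ) ≤ ((P : ℚ) / (Q : ℚ)) * (baseVal k (x.map Prod.snd) : ℚ)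
    rw [div_mul_eq_mul_div, le_div_iff₀ hQ0]
    have h3 : (Q : ℤ) * (baseVal k (x.map Prod.fst) : ℤ) ≤ (P : ℤ) * (baseVal k (x.map Prod.snd) : ℤ) := by
      simpa [baseVal] using h2
    have h4 : (Q : ℚ) * (baseVal k (x.map Prod.fst) : ℚ) ≤ (P : ℚ) * (baseVal k (x.map Prod.snd) : ℚ) := by
      exact_mod_cast h3
    linarith
  · intro h
    have hQ0 : (0 : ℚ) < (Q : ℚ) := by exact_mod_cast hQ
    have h' : (baseVal k (x.map Prod.fst) : ℚ) ≤ ((P : ℚ) / (Q : ℚ)) * (baseVal k (x.map Prod.snd) : ℚ) := h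
    rw [div_mul_eq_mul_div, le_div_iff₀ hQ0] at h'
    have h2 : (Q : ℤ) * (baseVal k (x.map Prod.fst) : ℤ) ≤ (P : ℤ) * (baseVal k (x.map Prod.snd) : ℤ) := by
      have h4 : (Q : ℚ) * (baseVal k (x.map Prod.fst) : ℚ) ≤ (P : ℚ) * (baseVal k (x.map Prod.snd) : ℚ) := by
        linarith
      exact_mod_cast h4
    apply (clamp_nonpos_iff P Q _).mpr
    rw [hfold]
    simpa [baseVal] using h2
end

section
/- Fix k ≥ 2 and a real β with 1/k ≤ β < 1. Suppose the language L_{≤β} = { x ∈ (Σ_k²)^* : [π₁(x)]_k ≤ β·[π₂(x)]_k } is regular. Then β is rational. -/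
/-!
For a word `x` over pairs of digits let `slack x = β·[π₂ x] - [π₁ x]`. Appending a word `y` whose
second track is zero keeps `x` in the language iff `[π₁ y] ≤ slack x · k^|y|`. So when the slack
lies in `[0, 1)` it is determined by the left quotient of `x`: the largest admissible `y` of each
length spells out its base-`k` digits. The word `x_m` with `[π₂ x_m] = k^m` and
`[π₁ x_m] = ⌊β k^m⌋` has slack in `[0, 1)`; by Myhill–Nerode two of them, `x_m` and `x_n`, share a
left quotient, so `β k^m - ⌊β k^m⌋ = β k^n - ⌊β k^n⌋` and `β` is rational.
-/

section BaseVal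

variable {k : ℕ}

theorem foldl_eq_mul_pow_add_baseVal (a : ℕ) (w : List (Fin k)) :
    w.foldl (fun acc d => acc * k + d.val) a = a * k ^ w.length + baseVal k w := by
  induction w generalizing a with
  | nil => simp [baseVal]
  | cons d w ih =>
    simp only [baseVal, List.foldl_cons, List.length_cons]
    rw [ih, ih]
    ring

theorem baseVal_append (u w : List (Fin k)) :
    baseVal k (u ++ w) = baseVal k u * k ^ w.length + baseVal k w := by
  rw [baseVal, List.foldl_append, foldl_eq_mul_pow_add_baseVal]
  rfl

theorem exists_baseVal_eq {m c : ℕ} (hc : c < k ^ m) :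
    ∃ w : List (Fin k), w.length = m ∧ baseVal k w = c := by
  induction m generalizing c with
  | zero => exact ⟨[], rfl, by simp_all [baseVal]⟩
  | succ m ih =>
    have hk : 0 < k := Nat.pos_of_ne_zero fun h => by simp [h] at hc
    obtain ⟨w, hw, hwc⟩ := ih (c := c / k) <| Nat.div_lt_of_lt_mul (by rwa [mul_comm, ← pow_succ])
    refine ⟨w ++ [⟨c % k, Nat.mod_lt c hk⟩], by simp [hw], ?_⟩
    rw [baseVal_append, hwc]
    simp [baseVal, Nat.div_add_mod']

theorem exists_pair_baseVal_eq {m a b : ℕ} (ha : a < k ^ m) (hb : b < k ^ m) :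
    ∃ x : List (Fin k × Fin k), x.length = m ∧
      baseVal k (x.map Prod.fst) = a ∧ baseVal k (x.map Prod.snd) = b := by
  obtain ⟨u, hu, rfl⟩ := exists_baseVal_eq ha
  obtain ⟨v, hv, rfl⟩ := exists_baseVal_eq hb
  have huv : u.length = v.length := hu.trans hv.symm
  exact ⟨u.zip v, by simp [hu, hv], by rw [List.map_fst_zip huv.le],
    by rw [List.map_snd_zip huv.ge]⟩

end BaseVal

theorem le_of_forall_mul_pow_lt_add_one {K : Type*} [Field K] [LinearOrder K]
    [IsStrictOrderedRing K] [Archimedean K] {k r s : K} (hk : 1 < k)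
    (h : ∀ t : ℕ, r * k ^ t < s * k ^ t + 1) : r ≤ s := by
  by_contra! hsr
  obtain ⟨t, ht⟩ := pow_unbounded_of_one_lt (1 / (r - s)) hk
  rw [div_lt_iff₀ (sub_pos.2 hsr)] at ht
  linarith [h t]

theorem exists_rat_eq_of_mul_sub_eq {β : ℝ} {a a' b b' : ℕ} (hb : b ≠ b')
    (h : β * b - a = β * b' - a') : ∃ q : ℚ, (q : ℝ) = β := by
  have hb' : (b : ℝ) - b' ≠ 0 := sub_ne_zero.2 (Nat.cast_injective.ne hb)
  refine ⟨((a : ℚ) - a') / ((b : ℚ) - b'), ?_⟩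
  push_cast
  rw [div_eq_iff hb']
  linear_combination -h

section LeLanguage

variable {k : ℕ} {β : ℝ}

def leLanguage (k : ℕ) (β : ℝ) : Language (Fin k × Fin k) :=
  { x | (baseVal k (x.map Prod.fst) : ℝ) ≤ β * (baseVal k (x.map Prod.snd) : ℝ) }

def slack (k : ℕ) (β : ℝ) (x : List (Fin k × Fin k)) : ℝ :=
  β * baseVal k (x.map Prod.snd) - baseVal k (x.map Prod.fst)

theorem mem_leftQuotient_leLanguage_iff {x y : List (Fin k × Fin k)}
    (hy : baseVal k (y.map Prod.snd) = 0) :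
    y ∈ (leLanguage k β).leftQuotient x ↔
      (baseVal k (y.map Prod.fst) : ℝ) ≤ slack k β x * (k : ℝ) ^ y.length := by
  change (baseVal k ((x ++ y).map Prod.fst) : ℝ) ≤ β * baseVal k ((x ++ y).map Prod.snd) ↔ _
  simp only [slack, List.map_append, baseVal_append, List.length_map, hy]
  push_cast
  constructor <;> intro h <;> linarith

theorem slack_mul_pow_lt_of_leftQuotient_le (hk : 0 < k) {x x' : List (Fin k × Fin k)}
    (hx : slack k β x ∈ Set.Ico 0 1)
    (h : (leLanguage k β).leftQuotient x ≤ (leLanguage k β).leftQuotient x') (t : ℕ) :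
    slack k β x * (k : ℝ) ^ t < slack k β x' * (k : ℝ) ^ t + 1 := by
  set r := slack k β x
  have hkt : (0 : ℝ) < (k : ℝ) ^ t := by positivity
  have hr : 0 ≤ r * (k : ℝ) ^ t := mul_nonneg hx.1 hkt.le
  have hc : ⌊r * (k : ℝ) ^ t⌋₊ < k ^ t := by
    rw [Nat.floor_lt hr]
    push_cast
    nlinarith [hx.2]
  obtain ⟨y, rfl, hy₁, hy₂⟩ := exists_pair_baseVal_eq hc (pow_pos hk t)
  have hy : y ∈ (leLanguage k β).leftQuotient x := by
    rw [mem_leftQuotient_leLanguage_iff hy₂, hy₁]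
    exact Nat.floor_le hr
  replace hy := (mem_leftQuotient_leLanguage_iff hy₂).1 (h hy)
  rw [hy₁] at hy
  linarith [Nat.lt_floor_add_one (r * (k : ℝ) ^ y.length)]

theorem slack_eq_of_leftQuotient_eq (hk : 1 < k) {x x' : List (Fin k × Fin k)}
    (hx : slack k β x ∈ Set.Ico 0 1) (hx' : slack k β x' ∈ Set.Ico 0 1)
    (h : (leLanguage k β).leftQuotient x = (leLanguage k β).leftQuotient x') :
    slack k β x = slack k β x' :=
  have hkR : (1 : ℝ) < k := by exact_mod_cast hk
  le_antisymm
    (le_of_forall_mul_pow_lt_add_one hkR (slack_mul_pow_lt_of_leftQuotient_le (by lia) hx h.le))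
    (le_of_forall_mul_pow_lt_add_one hkR (slack_mul_pow_lt_of_leftQuotient_le (by lia) hx' h.ge))

theorem exists_slack_mem_Ico (hβ₀ : 0 ≤ β) (hβ₁ : β ≤ 1) {ℓ b : ℕ} (hb : b < k ^ ℓ) :
    ∃ x : List (Fin k × Fin k), baseVal k (x.map Prod.snd) = b ∧ slack k β x ∈ Set.Ico 0 1 := by
  have hβb : 0 ≤ β * b := by positivity
  have ha : ⌊β * b⌋₊ < k ^ ℓ :=
    (Nat.floor_le_of_le (by nlinarith : β * b ≤ b)).trans_lt hb
  obtain ⟨x, -, hx₁, hx₂⟩ := exists_pair_baseVal_eq ha hb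
  refine ⟨x, hx₂, ?_, ?_⟩ <;> simp only [slack, hx₁, hx₂, sub_nonneg, sub_lt_iff_lt_add']
  · exact Nat.floor_le hβb
  · exact Nat.lt_floor_add_one _

end LeLanguage

theorem regular_leq_beta_implies_rational (k : ℕ) (hk : 2 ≤ k) (β : ℝ)
    (hβ₁ : 1 / (k : ℝ) ≤ β) (hβ₂ : β < 1)
    (hreg : Language.IsRegular
      { x : List (Fin k × Fin k) |
        (baseVal k (x.map Prod.fst) : ℝ) ≤ β * (baseVal k (x.map Prod.snd) : ℝ) }) :
    ∃ q : ℚ, (q : ℝ) = β := by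
  change (leLanguage k β).IsRegular at hreg
  have hβ₀ : 0 ≤ β := le_trans (by positivity) hβ₁
  choose x hx₂ hx using fun m : ℕ =>
    exists_slack_mem_Ico hβ₀ hβ₂.le (Nat.pow_lt_pow_succ hk : k ^ m < k ^ (m + 1))
  obtain ⟨m, n, hmn, hq⟩ := hreg.finite_range_leftQuotient.exists_lt_map_eq_of_forall_mem
    (f := fun m => (leLanguage k β).leftQuotient (x m)) (fun m => Set.mem_range_self _)
  have hslack := slack_eq_of_leftQuotient_eq hk (hx m) (hx n) hq
  refine exists_rat_eq_of_mul_sub_eq ?_ hslack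
  rw [hx₂, hx₂]
  exact (Nat.pow_lt_pow_right hk hmn).ne
end

section
/- Let L ⊆ (Σ_k²)^* be a language such that: (a) no word of L begins with [0,0]; (b) quo_k(L) = { [π₁(x)]_k/[π₂(x)]_k : x ∈ L } is infinite; (c) whenever (p,q)_k ∈ L then p ≥ q ≥ 1; (d) whenever (p,q)_k ∈ L and p > q, also (p−1,q)_k ∈ L. Then every special point of quo_k(L) other than possibly 1 is an accumulation point of the set quo_k(L). -/
/-- The quotient of the base-k values of the two coordinates of a word over Σ_k². -/
noncomputable def quoVal (k : ℕ) (x : List (Fin k × Fin k)) : ℝ :=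
  (baseVal k (x.map Prod.fst) : ℝ) / (baseVal k (x.map Prod.snd) : ℝ)

/-- β is a (finite) special point of quo_k(L). -/
def IsSpecialPoint (k : ℕ) (L : Language (Fin k × Fin k)) (β : ℝ) : Prop :=
  ∃ x : ℕ → List (Fin k × Fin k), Function.Injective x ∧ (∀ j, x j ∈ L) ∧
    Filter.Tendsto (fun j => quoVal k (x j)) Filter.atTop (nhds β)

open Filter Topology

theorem List.tendsto_length_atTop_of_injective {α : Type*} [Finite α] {x : ℕ → List α}
    (hx : Function.Injective x) : Tendsto (fun j => (x j).length) atTop atTop := by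
  have hlen : Tendsto (List.length (α := α)) cofinite atTop := tendsto_atTop.2 fun n => by
    filter_upwards [(List.finite_length_lt α n).eventually_cofinite_notMem] with l hl
    simpa using hl
  exact (hlen.comp hx.tendsto_cofinite).mono_left Nat.cofinite_eq_atTop.ge

theorem accPt_of_tendsto_of_ne {X ι : Type*} [TopologicalSpace X] {l : Filter ι} [l.NeBot]
    {u v : ι → X} {a : X} {S : Set X} (hu : Tendsto u l (𝓝 a)) (hv : Tendsto v l (𝓝 a))
    (huv : ∀ᶠ i in l, u i ≠ v i) (huS : ∀ᶠ i in l, u i ∈ S)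
    (hvS : ∀ᶠ i in l, v i ∈ S) :
    AccPt a (𝓟 S) := by
  rw [accPt_iff_frequently, frequently_iff]
  intro U hU
  obtain ⟨i, hui, hvi, hne, hiS, hvS⟩ :=
    ((hu.eventually_mem hU).and <| (hv.eventually_mem hU).and <| huv.and <| huS.and hvS).exists
  by_cases hua : u i = a
  · exact ⟨v i, hvi, fun hva => hne (hua.trans hva.symm), hvS⟩
  · exact ⟨u i, hui, hua, hiS⟩

theorem mul_pow_length_le_foldl (k a : ℕ) (w : List (Fin k)) :
    a * k ^ w.length ≤ w.foldl (fun acc d => acc * k + d.val) a := by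
  induction w generalizing a with
  | nil => simp
  | cons d w ih =>
    calc a * k ^ (d :: w).length = a * k * k ^ w.length := by rw [List.length_cons, pow_succ']; ring
      _ ≤ (a * k + d.val) * k ^ w.length := by gcongr; omega
      _ ≤ _ := ih _

theorem pow_length_le_baseVal_cons {k : ℕ} {d : Fin k} (hd : d.val ≠ 0) (w : List (Fin k)) :
    k ^ w.length ≤ baseVal k (d :: w) :=
  calc k ^ w.length ≤ (0 * k + d.val) * k ^ w.length := by
        rw [zero_mul, zero_add]; exact Nat.le_mul_of_pos_left _ (Nat.pos_of_ne_zero hd)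
    _ ≤ baseVal k (d :: w) := mul_pow_length_le_foldl k _ w

/-- The words of this form are exactly the canonical encodings `(p,q)_k`. -/
def IsCanonical (k : ℕ) (x : List (Fin k × Fin k)) : Prop :=
  ∀ (d : Fin k × Fin k) (y : List (Fin k × Fin k)),
    x = d :: y → d.1.val ≠ 0 ∨ d.2.val ≠ 0

theorem IsCanonical.length_le_max_baseVal {k : ℕ} (hk : 2 ≤ k) {x : List (Fin k × Fin k)}
    (hx : IsCanonical k x) :
    x.length ≤ max (baseVal k (x.map Prod.fst)) (baseVal k (x.map Prod.snd)) := by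
  cases x with
  | nil => simp
  | cons d y =>
    have hlt : y.length < k ^ y.length := Nat.lt_pow_self (by omega)
    have hpow : k ^ y.length ≤
        max (baseVal k ((d :: y).map Prod.fst)) (baseVal k ((d :: y).map Prod.snd)) := by
      rcases hx d y rfl with hd | hd
      · exact le_max_of_le_left (by simpa using pow_length_le_baseVal_cons hd (y.map Prod.fst))
      · exact le_max_of_le_right (by simpa using pow_length_le_baseVal_cons hd (y.map Prod.snd))
    rw [List.length_cons]
    omega

theorem quoVal_eq_sub_inv {k : ℕ} {x y : List (Fin k × Fin k)}
    (hp : 0 < baseVal k (x.map Prod.fst))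
    (hyp : baseVal k (y.map Prod.fst) = baseVal k (x.map Prod.fst) - 1)
    (hyq : baseVal k (y.map Prod.snd) = baseVal k (x.map Prod.snd)) :
    quoVal k y = quoVal k x - (baseVal k (x.map Prod.snd) : ℝ)⁻¹ := by
  rw [quoVal, quoVal, hyp, hyq, Nat.cast_sub hp, Nat.cast_one, sub_div, one_div]

theorem special_points_are_accumulation_points_general (k : ℕ) (hk : 2 ≤ k)
    (L : Language (Fin k × Fin k))
    (hlead : ∀ x ∈ L, ∀ (d : Fin k × Fin k) (y : List (Fin k × Fin k)),
      x = d :: y → d.1.val ≠ 0 ∨ d.2.val ≠ 0)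
    (hge : ∀ x ∈ L, 1 ≤ baseVal k (x.map Prod.snd) ∧
      baseVal k (x.map Prod.snd) ≤ baseVal k (x.map Prod.fst))
    (hdec : ∀ x ∈ L, baseVal k (x.map Prod.snd) < baseVal k (x.map Prod.fst) →
      ∃ y ∈ L, baseVal k (y.map Prod.fst) = baseVal k (x.map Prod.fst) - 1 ∧
        baseVal k (y.map Prod.snd) = baseVal k (x.map Prod.snd)) :
    ∀ β : ℝ, IsSpecialPoint k L β → β ≠ 1 →
      AccPt β (Filter.principal { r : ℝ | ∃ x ∈ L, r = quoVal k x }) := by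
  rintro β ⟨x, hinj, hmem, htend⟩ hβ1
  have hp_pos j : 0 < baseVal k ((x j).map Prod.fst) :=
    (hge _ (hmem j)).1.trans (hge _ (hmem j)).2
  have hq_pos j : (0 : ℝ) < baseVal k ((x j).map Prod.snd) := by
    exact_mod_cast (hge _ (hmem j)).1
  have hβ : 1 < β := by
    refine lt_of_le_of_ne (ge_of_tendsto' htend fun j => ?_) (Ne.symm hβ1)
    exact (one_le_div (hq_pos j)).2 (by exact_mod_cast (hge _ (hmem j)).2)
  have hp_top : Tendsto (fun j => (baseVal k ((x j).map Prod.fst) : ℝ)) atTop atTop := by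
    refine tendsto_natCast_atTop_atTop.comp <|
      tendsto_atTop_mono (fun j => ?_) (List.tendsto_length_atTop_of_injective hinj)
    simpa [max_eq_left (hge _ (hmem j)).2] using
      IsCanonical.length_le_max_baseVal hk (hlead _ (hmem j))
  have hq_inv : Tendsto (fun j => (baseVal k ((x j).map Prod.snd) : ℝ)⁻¹) atTop (𝓝 0) := by
    have := htend.mul (tendsto_inv_atTop_zero.comp hp_top)
    rw [mul_zero] at this
    -- `q⁻¹ = (p / q) * p⁻¹`
    refine this.congr fun j => ?_
    have hp : (baseVal k ((x j).map Prod.fst) : ℝ) ≠ 0 := by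
      exact_mod_cast (hp_pos j).ne'
    simp only [Function.comp_apply, quoVal]
    field_simp
  refine accPt_of_tendsto_of_ne htend (by simpa using htend.sub hq_inv)
    (.of_forall fun j => (sub_lt_self _ (inv_pos.2 (hq_pos j))).ne')
    (.of_forall fun j => ⟨x j, hmem j, rfl⟩) ?_
  filter_upwards [htend.eventually (lt_mem_nhds hβ)] with j hj
  obtain ⟨y, hy, hyp, hyq⟩ := hdec _ (hmem j) (by exact_mod_cast (one_lt_div (hq_pos j)).1 hj)
  exact ⟨y, hy, (quoVal_eq_sub_inv (hp_pos j) hyp hyq).symm⟩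

theorem special_points_are_accumulation_points (k : ℕ) (hk : 2 ≤ k)
    (L : Language (Fin k × Fin k))
    (hlead : ∀ x ∈ L, ∀ (d : Fin k × Fin k) (y : List (Fin k × Fin k)),
      x = d :: y → d.1.val ≠ 0 ∨ d.2.val ≠ 0)
    (hquoinf : { r : ℝ | ∃ x ∈ L, r = quoVal k x }.Infinite)
    (hge : ∀ x ∈ L, 1 ≤ baseVal k (x.map Prod.snd) ∧
      baseVal k (x.map Prod.snd) ≤ baseVal k (x.map Prod.fst))
    (hdec : ∀ x ∈ L, baseVal k (x.map Prod.snd) < baseVal k (x.map Prod.fst) →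
      ∃ y ∈ L, baseVal k (y.map Prod.fst) = baseVal k (x.map Prod.fst) - 1 ∧
        baseVal k (y.map Prod.snd) = baseVal k (x.map Prod.snd)) :
    ∀ β : ℝ, IsSpecialPoint k L β → β ≠ 1 →
      AccPt β (Filter.principal { r : ℝ | ∃ x ∈ L, r = quoVal k x }) :=
  special_points_are_accumulation_points_general k hk L hlead hge hdec
end

section
/- The Thue–Morse sequence t (where t(n) is the parity of the number of 1s in the binary expansion of n) has critical exponent exactly 2: it contains a square factor (e.g., t[2..3] = 00), every factor of t has exponent at most 2, and the supremum over all nonempty factors w of t of exp(w) equals 2. -/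
/-!
Writing `n = 2m + r` with `r < 2`, one has `t(2m + r) ≡ t(m) + r (mod 2)`. Hence an overlap of
even period `2q`, read along the residue class mod 2 of its starting point, halves to an overlap
of period `q`, which sets up an induction on the period. An overlap of odd period matches an
even-aligned block with an odd-aligned one; since the pairs `t(2m), t(2m+1)` are complementary,
this forces `t(s) = t(s+1) = t(s+2)` for some `s`, impossible because `t(s) = t(s+1)` only
happens for odd `s`.
-/

/-- The Thue–Morse sequence: parity of the number of 1s in the binary expansion. -/
def thueMorse (n : ℕ) : ℕ := (Nat.digits 2 n).sum % 2

/-- `p` is a period of the length-`len` factor of Thue–Morse starting at position `i`. -/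
def TMPeriod (i len p : ℕ) : Prop :=
  0 < p ∧ p ≤ len ∧ ∀ j, j + p < len → thueMorse (i + j) = thueMorse (i + j + p)

lemma thueMorse_lt_two (n : ℕ) : thueMorse n < 2 := Nat.mod_lt _ two_pos

lemma thueMorse_two_mul_add {n r : ℕ} (hr : r < 2) :
    thueMorse (2 * n + r) = (thueMorse n + r) % 2 := by
  rcases eq_or_ne r 0 with rfl | hr0
  · rcases eq_or_ne n 0 with rfl | hn0
    · rfl
    · unfold thueMorse
      rw [add_zero, ← zero_add (2 * n), Nat.digits_add 2 one_lt_two 0 n two_pos (.inr hn0)]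
      simp
  · unfold thueMorse
    rw [add_comm, Nat.digits_add 2 one_lt_two r n hr (.inl hr0), List.sum_cons]
    omega

lemma thueMorse_two_mul_add_eq_iff {a b r : ℕ} (hr : r < 2) :
    thueMorse (2 * a + r) = thueMorse (2 * b + r) ↔ thueMorse a = thueMorse b := by
  rw [thueMorse_two_mul_add hr, thueMorse_two_mul_add hr]
  have := thueMorse_lt_two a
  have := thueMorse_lt_two b
  omega

lemma thueMorse_two_mul_add_one_ne (n : ℕ) : thueMorse (2 * n + 1) ≠ thueMorse (2 * n) := by
  rw [thueMorse_two_mul_add one_lt_two, ← add_zero (2 * n), thueMorse_two_mul_add two_pos]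
  omega

lemma thueMorse_eq_succ_iff (n : ℕ) :
    thueMorse n = thueMorse (n + 1) ↔ thueMorse (2 * n + 1) ≠ thueMorse (2 * n + 2) := by
  rw [show 2 * n + 2 = 2 * (n + 1) + 0 by ring, thueMorse_two_mul_add one_lt_two,
    thueMorse_two_mul_add two_pos]
  have := thueMorse_lt_two n
  have := thueMorse_lt_two (n + 1)
  omega

lemma odd_of_thueMorse_eq_succ {n : ℕ} (h : thueMorse n = thueMorse (n + 1)) : Odd n := by
  by_contra hn
  obtain ⟨m, rfl⟩ := Nat.not_odd_iff_even.mp hn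
  exact thueMorse_two_mul_add_one_ne m (by rw [← two_mul] at h; exact h.symm)

lemma not_thueMorse_eq_succ_eq_succ_succ (n : ℕ) :
    ¬ (thueMorse n = thueMorse (n + 1) ∧ thueMorse (n + 1) = thueMorse (n + 2)) := by
  rintro ⟨h₀, h₁⟩
  have := odd_of_thueMorse_eq_succ h₀
  have := odd_of_thueMorse_eq_succ h₁
  grind

lemma not_thueMorse_agree_even_odd (m s : ℕ) :
    ¬ ∀ j < 4, thueMorse (2 * m + j) = thueMorse (2 * s + 1 + j) := by
  intro h
  have pair (k : ℕ) (hk : k < 2) : thueMorse (s + k) = thueMorse (s + k + 1) := by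
    rw [thueMorse_eq_succ_iff, show 2 * (s + k) + 1 = 2 * s + 1 + 2 * k by ring,
      show 2 * (s + k) + 2 = 2 * s + 1 + (2 * k + 1) by ring, ← h (2 * k) (by omega),
      ← h (2 * k + 1) (by omega), ← add_assoc, ← mul_add]
    exact (thueMorse_two_mul_add_one_ne (m + k)).symm
  exact not_thueMorse_eq_succ_eq_succ_succ s ⟨pair 0 (by omega), pair 1 (by omega)⟩

theorem not_thueMorse_overlap {p : ℕ} (hp : 0 < p) (i : ℕ) :
    ¬ ∀ j ≤ p, thueMorse (i + j) = thueMorse (i + j + p) := by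
  induction p using Nat.strong_induction_on generalizing i with
  | _ p ih =>
    intro H
    obtain ⟨q, hq | hq⟩ := Nat.even_or_odd' p
    · refine ih q (by omega) (by omega) (i / 2) fun k hk => ?_
      have h := H (2 * k) (by omega)
      rwa [show i + 2 * k + p = 2 * (i / 2 + k + q) + i % 2 by omega,
        show i + 2 * k = 2 * (i / 2 + k) + i % 2 by omega,
        thueMorse_two_mul_add_eq_iff (Nat.mod_lt _ two_pos)] at h
    · rcases Nat.eq_zero_or_pos q with rfl | hq0
      · subst hq
        exact not_thueMorse_eq_succ_eq_succ_succ i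
          ⟨by simpa using H 0 (by omega), by simpa [add_assoc] using H 1 (by omega)⟩
      obtain ⟨m, rfl | rfl⟩ := Nat.even_or_odd' i
      · exact not_thueMorse_agree_even_odd m (m + q) fun j hj => by
          rw [H j (by omega)]; congr 1; omega
      · exact not_thueMorse_agree_even_odd (m + q + 1) m fun j hj => by
          rw [H j (by omega)]; congr 1; omega

lemma TMPeriod.len_le_two_mul {i len p : ℕ} (h : TMPeriod i len p) : len ≤ 2 * p := by
  obtain ⟨hp, -, hper⟩ := h
  by_contra hlen
  exact not_thueMorse_overlap hp i fun j hj => hper j (by omega)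

lemma tmPeriod_one_two_one : TMPeriod 1 2 1 := by
  refine ⟨one_pos, one_le_two, fun j hj => ?_⟩
  obtain rfl : j = 0 := by omega
  decide

theorem thueMorse_critical_exponent_two :
    (∃ i l : ℕ, 0 < l ∧ TMPeriod i (2 * l) l) ∧
    (∀ i len p : ℕ, TMPeriod i len p → len ≤ 2 * p) ∧
    IsLUB { e : ℝ | ∃ i len p : ℕ, TMPeriod i len p ∧ e = (len : ℝ) / (p : ℝ) } 2 := by
  refine ⟨⟨1, 1, one_pos, tmPeriod_one_two_one⟩, fun _ _ _ h => h.len_le_two_mul, ?_⟩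
  refine IsGreatest.isLUB ⟨⟨1, 2, 1, tmPeriod_one_two_one, by norm_num⟩, ?_⟩
  rintro e ⟨i, len, p, h, rfl⟩
  rw [div_le_iff₀ (by exact_mod_cast h.1)]
  exact_mod_cast h.len_le_two_mul
end

section
/- The Rudin–Shapiro sequence r (where r(n) counts modulo 2 the occurrences of the pattern '11' in the binary expansion of n) is not the fixed point of any uniform morphism. Specifically: for every k ≥ 1, r is not a fixed point of a 2^k-uniform morphism, because if it were, then r(2^k − 1) = r(2^(k+1) − 1), but the number of occurrences of '11' in the binary expansion of 2^(k+1) − 1 is exactly one more than in that of 2^k − 1, so r(2^(k+1) − 1) ≠ r(2^k − 1). -/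
/-!
The binary expansion of `2 ^ k - 1` is a block of `k` ones, so it contains `k - 1` occurrences
of `11`; hence `r (2 ^ k - 1)` and `r (2 ^ (k + 1) - 1)` have different parities. On the other
hand, a fixed point `r` of a `2 ^ k`-uniform morphism `h` satisfies `r (2 ^ k * q + j) = h (r q) j`,
so `r (2 ^ k - 1)` and `r (2 ^ (k + 1) - 1)` are the last letters of `h (r 0)` and `h (r 1)`,
which agree because `r 0 = r 1 = 0`.
-/

/-- Number of occurrences of the pattern `11` in the binary expansion of `n`. -/
def occ11 (n : ℕ) : ℕ :=
  ((Finset.range n).filter (fun i => n.testBit i = true ∧ n.testBit (i + 1) = true)).card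

/-- The Rudin–Shapiro sequence. -/
def rudinShapiro (n : ℕ) : ℕ := occ11 n % 2

theorem occ11_two_pow_sub_one (k : ℕ) : occ11 (2 ^ k - 1) = k - 1 := by
  have hk : k - 1 ≤ 2 ^ k - 1 := Nat.sub_le_sub_right (Nat.lt_two_pow_self).le 1
  have hfilter : (Finset.range (2 ^ k - 1)).filter
      (fun i => (2 ^ k - 1).testBit i = true ∧ (2 ^ k - 1).testBit (i + 1) = true) =
      Finset.range (k - 1) := by
    ext i
    simp only [Finset.mem_filter, Finset.mem_range, Nat.testBit_two_pow_sub_one,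
      decide_eq_true_eq]
    omega
  rw [occ11, hfilter, Finset.card_range]

theorem rudinShapiro_two_pow_sub_one_ne {k : ℕ} (hk : 1 ≤ k) :
    rudinShapiro (2 ^ k - 1) ≠ rudinShapiro (2 ^ (k + 1) - 1) := by
  rw [rudinShapiro, rudinShapiro, occ11_two_pow_sub_one, occ11_two_pow_sub_one]
  omega

section UniformFixedPoint

variable {α : Type*} {f : ℕ → α} {h : α → List α} {m : ℕ} {d : α}

theorem apply_mul_add_of_forall_eq_getD (hfix : ∀ n, f n = (h (f (n / m))).getD (n % m) d)
    (q : ℕ) {j : ℕ} (hj : j < m) : f (m * q + j) = (h (f q)).getD j d := by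
  have hm : 0 < m := by omega
  rw [hfix, Nat.mul_add_div hm, Nat.div_eq_of_lt hj, add_zero, Nat.mul_add_mod,
    Nat.mod_eq_of_lt hj]

theorem apply_pred_eq_apply_two_mul_pred_of_forall_eq_getD
    (hfix : ∀ n, f n = (h (f (n / m))).getD (n % m) d) (hm : 0 < m) (h01 : f 0 = f 1) :
    f (m - 1) = f (2 * m - 1) := by
  have hlast : m - 1 < m := by omega
  calc f (m - 1) = f (m * 0 + (m - 1)) := by rw [mul_zero, zero_add]
    _ = f (m * 1 + (m - 1)) := by
      rw [apply_mul_add_of_forall_eq_getD hfix 0 hlast,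
        apply_mul_add_of_forall_eq_getD hfix 1 hlast, h01]
    _ = f (2 * m - 1) := by congr 1; omega

end UniformFixedPoint

theorem rudinShapiro_not_fixed_point_of_uniform_morphism :
    ∀ k : ℕ, 1 ≤ k →
      (¬ ∃ h : ℕ → List ℕ, (∀ a, (h a).length = 2 ^ k) ∧
        (∀ n, rudinShapiro n = (h (rudinShapiro (n / 2 ^ k))).getD (n % 2 ^ k) 0)) ∧
      rudinShapiro (2 ^ k - 1) ≠ rudinShapiro (2 ^ (k + 1) - 1) := by
  intro k hk
  refine ⟨?_, rudinShapiro_two_pow_sub_one_ne hk⟩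
  rintro ⟨h, -, hfix⟩
  apply rudinShapiro_two_pow_sub_one_ne hk
  have hr01 : rudinShapiro 0 = rudinShapiro 1 := by decide
  rw [pow_succ']
  exact apply_pred_eq_apply_two_mul_pred_of_forall_eq_getD hfix (by positivity) hr01
end
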